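/- Let $N(S,\delta) := 1 + \sum_{(S_1,\dots,S_l)\vdash\vdash S,\,l>0}\delta^{2l}$ as above. If $(T_1,\dots,T_m)\vdash\vdash S$ is a pseudosubpartition of $S$, then $N(T_1,\delta)\cdots N(T_m,\delta) \le N(S,\delta)$. -/

import Mathlib

open Finset

/-- `P` is a pseudosubpartition of `S ⊆ [c] ⊔ [k]` intersecting `[k]`
non-trivially. -/
def IsPseudo {c k : ℕ} (S : Finset (Fin c ⊕ Fin k))
    (P : Finset (Finset (Fin c ⊕ Fin k))) : Prop :=
  (∀ B ∈ P, B ⊆ S ∧ ∃ s ∈ B, s.isRight = true) ∧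
  ∀ B ∈ P, ∀ B' ∈ P, B ≠ B' → ∀ s, s ∈ B → s ∈ B' → s.isRight = false

open Classical in
/-- The normalisation factor `N(S,δ) = 1 + ∑_{(S₁,…,S_l) ⊢⊢ S, l>0} δ^{2l}`. -/
noncomputable def NS {c k : ℕ} (δ : ℝ) (S : Finset (Fin c ⊕ Fin k)) : ℝ :=
  1 + ∑ P ∈ Finset.univ.filter
        (fun P : Finset (Finset (Fin c ⊕ Fin k)) => IsPseudo S P ∧ P.Nonempty),
      δ ^ (2 * P.card)

lemma isPseudo_empty {c k : ℕ} (S : Finset (Fin c ⊕ Fin k)) : IsPseudo S ∅ := by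
  constructor <;> simp

open Classical in
lemma NS_eq {c k : ℕ} (δ : ℝ) (S : Finset (Fin c ⊕ Fin k)) :
    NS δ S = ∑ P ∈ Finset.univ.filter
        (fun P : Finset (Finset (Fin c ⊕ Fin k)) => IsPseudo S P), δ ^ (2 * P.card) := by
  have h : (Finset.univ.filter (fun P : Finset (Finset (Fin c ⊕ Fin k)) => IsPseudo S P))
      = insert ∅ (Finset.univ.filter
          (fun P : Finset (Finset (Fin c ⊕ Fin k)) => IsPseudo S P ∧ P.Nonempty)) := by
    ext P
    simp only [mem_filter, mem_univ, true_and, mem_insert, Finset.nonempty_iff_ne_empty]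
    constructor
    · intro hP
      by_cases hP0 : P = ∅
      · exact Or.inl hP0
      · exact Or.inr ⟨hP, hP0⟩
    · rintro (rfl | ⟨hP, _⟩)
      · exact isPseudo_empty S
      · exact hP
  rw [h, Finset.sum_insert (by simp [Finset.nonempty_iff_ne_empty])]
  simp [NS]

lemma NS_nonneg {c k : ℕ} {δ : ℝ} (hδ0 : 0 ≤ δ) (S : Finset (Fin c ⊕ Fin k)) :
    0 ≤ NS δ S := by
  rw [NS_eq]
  exact Finset.sum_nonneg fun P _ => pow_nonneg hδ0 _

open Classical in
lemma NS_mul_le {c k : ℕ} {δ : ℝ} (hδ0 : 0 ≤ δ)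
    (t S' S : Finset (Fin c ⊕ Fin k)) (ht : t ⊆ S) (hS' : S' ⊆ S)
    (hd : ∀ s ∈ t, s.isRight = true → s ∉ S') :
    NS δ t * NS δ S' ≤ NS δ S := by
  rw [NS_eq, NS_eq, NS_eq]
  set A := Finset.univ.filter
    (fun P : Finset (Finset (Fin c ⊕ Fin k)) => IsPseudo t P) with hA
  set B := Finset.univ.filter
    (fun P : Finset (Finset (Fin c ⊕ Fin k)) => IsPseudo S' P) with hB
  -- blocks of a pseudo of t are ⊆ t; blocks of a pseudo of S' are not ⊆ t
  have hnotsub : ∀ P₂ ∈ B, ∀ B₂ ∈ P₂, ¬ B₂ ⊆ t := by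
    intro P₂ hP₂ B₂ hB₂ hsub
    simp only [hB, mem_filter] at hP₂
    obtain ⟨-, s, hs, hsr⟩ := hP₂.2.1 B₂ hB₂
    exact hd s (hsub hs) hsr ((hP₂.2.1 B₂ hB₂).1 hs)
  have hdisj : ∀ P₁ ∈ A, ∀ P₂ ∈ B, Disjoint P₁ P₂ := by
    intro P₁ hP₁ P₂ hP₂
    simp only [hA, mem_filter] at hP₁
    rw [Finset.disjoint_left]
    intro B₁ h₁ h₂
    exact hnotsub P₂ hP₂ B₁ h₂ (hP₁.2.1 B₁ h₁).1
  have hfilt : ∀ P₁ ∈ A, ∀ P₂ ∈ B,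
      (P₁ ∪ P₂).filter (fun B => B ⊆ t) = P₁ := by
    intro P₁ hP₁ P₂ hP₂
    simp only [hA, mem_filter] at hP₁
    ext B
    simp only [mem_filter, Finset.mem_union]
    constructor
    · rintro ⟨(h | h), hsub⟩
      · exact h
      · exact absurd hsub (hnotsub P₂ hP₂ B h)
    · intro h
      exact ⟨Or.inl h, (hP₁.2.1 B h).1⟩
  have hpseudo : ∀ P₁ ∈ A, ∀ P₂ ∈ B, IsPseudo S (P₁ ∪ P₂) := by
    intro P₁ hP₁ P₂ hP₂
    simp only [hA, mem_filter] at hP₁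
    simp only [hB, mem_filter] at hP₂
    obtain ⟨h₁sub, h₁pw⟩ := hP₁.2
    obtain ⟨h₂sub, h₂pw⟩ := hP₂.2
    constructor
    · intro B hBmem
      rcases Finset.mem_union.1 hBmem with h | h
      · exact ⟨(h₁sub B h).1.trans ht, (h₁sub B h).2⟩
      · exact ⟨(h₂sub B h).1.trans hS', (h₂sub B h).2⟩
    · intro B hBm B' hB'm hne s hsB hsB'
      by_contra hr
      have hr' : s.isRight = true := by
        cases h : s.isRight
        · exact absurd h hr
        · rfl
      rcases Finset.mem_union.1 hBm with h | h <;>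
        rcases Finset.mem_union.1 hB'm with h' | h'
      · exact hr (h₁pw B h B' h' hne s hsB hsB')
      · exact hd s ((h₁sub B h).1 hsB) hr' ((h₂sub B' h').1 hsB')
      · exact hd s ((h₁sub B' h').1 hsB') hr' ((h₂sub B h).1 hsB)
      · exact hr (h₂pw B h B' h' hne s hsB hsB')
  calc (∑ P ∈ A, δ ^ (2 * P.card)) * ∑ P ∈ B, δ ^ (2 * P.card)
      = ∑ p ∈ A ×ˢ B, δ ^ (2 * (p.1 ∪ p.2).card) := by
        rw [Finset.sum_mul_sum, Finset.sum_product]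
        refine Finset.sum_congr rfl fun P₁ hP₁ => Finset.sum_congr rfl fun P₂ hP₂ => ?_
        rw [Finset.card_union_of_disjoint (hdisj P₁ hP₁ P₂ hP₂), ← pow_add]
        ring_nf
    _ = ∑ P ∈ (A ×ˢ B).image (fun p => p.1 ∪ p.2), δ ^ (2 * P.card) := by
        rw [Finset.sum_image]
        intro p hp q hq heq
        rw [Finset.mem_coe, Finset.mem_product] at hp hq
        beta_reduce at heq
        have h1 : p.1 = q.1 := by
          rw [← hfilt p.1 hp.1 p.2 hp.2, ← hfilt q.1 hq.1 q.2 hq.2, heq]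
        have h2 : p.2 = q.2 := by
          have hp2 : p.2 = (p.1 ∪ p.2) \ p.1 :=
            (Finset.union_sdiff_cancel_left (hdisj p.1 hp.1 p.2 hp.2)).symm
          have hq2 : q.2 = (q.1 ∪ q.2) \ q.1 :=
            (Finset.union_sdiff_cancel_left (hdisj q.1 hq.1 q.2 hq.2)).symm
          rw [hp2, hq2, heq, h1]
        exact Prod.ext h1 h2
    _ ≤ ∑ P ∈ Finset.univ.filter
          (fun P : Finset (Finset (Fin c ⊕ Fin k)) => IsPseudo S P), δ ^ (2 * P.card) := by
        refine Finset.sum_le_sum_of_subset_of_nonneg ?_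
          (fun P _ _ => pow_nonneg hδ0 _)
        intro P hP
        simp only [Finset.mem_image, Finset.mem_product] at hP
        obtain ⟨p, ⟨hp1, hp2⟩, rfl⟩ := hP
        simp only [mem_filter, mem_univ, true_and]
        exact hpseudo p.1 hp1 p.2 hp2

open Classical in
lemma stmt14_aux {c k : ℕ} (δ : ℝ) (hδ0 : 0 ≤ δ)
    (Q : Finset (Finset (Fin c ⊕ Fin k))) :
    ∀ S : Finset (Fin c ⊕ Fin k), IsPseudo S Q → ∏ t ∈ Q, NS δ t ≤ NS δ S := by
  induction Q using Finset.induction_on with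
  | empty =>
      intro S _
      rw [Finset.prod_empty, NS_eq]
      have hmem : (∅ : Finset (Finset (Fin c ⊕ Fin k))) ∈ Finset.univ.filter
          (fun P : Finset (Finset (Fin c ⊕ Fin k)) => IsPseudo S P) := by
        simp [isPseudo_empty]
      have := Finset.single_le_sum
        (f := fun P : Finset (Finset (Fin c ⊕ Fin k)) => δ ^ (2 * P.card))
        (fun P _ => pow_nonneg hδ0 _) hmem
      simpa using this
  | @insert t Q' ht ih =>
      intro S hQ
      set S' := S \ (t.filter (fun s => s.isRight)) with hS'def
      have hQ' : IsPseudo S' Q' := by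
        constructor
        · intro B hB
          have hBmem : B ∈ insert t Q' := Finset.mem_insert_of_mem hB
          obtain ⟨hBS, s, hs, hsr⟩ := hQ.1 B hBmem
          refine ⟨?_, s, hs, hsr⟩
          intro x hx
          rw [hS'def, Finset.mem_sdiff]
          refine ⟨hBS hx, ?_⟩
          intro hxt
          rw [Finset.mem_filter] at hxt
          have hne : B ≠ t := fun h => ht (h ▸ hB)
          have := hQ.2 B hBmem t (Finset.mem_insert_self t Q') hne x hx hxt.1
          rw [this] at hxt
          exact Bool.noConfusion hxt.2
        · intro B hB B' hB' hne s hsB hsB'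
          exact hQ.2 B (Finset.mem_insert_of_mem hB) B' (Finset.mem_insert_of_mem hB')
            hne s hsB hsB'
      rw [Finset.prod_insert ht]
      have h1 : ∏ u ∈ Q', NS δ u ≤ NS δ S' := ih S' hQ'
      have h2 : NS δ t * (∏ u ∈ Q', NS δ u) ≤ NS δ t * NS δ S' :=
        mul_le_mul_of_nonneg_left h1 (NS_nonneg hδ0 t)
      refine h2.trans (NS_mul_le hδ0 t S' S ?_ ?_ ?_)
      · exact (hQ.1 t (Finset.mem_insert_self t Q')).1
      · exact Finset.sdiff_subset
      · intro s hst hsr hsS'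
        rw [hS'def, Finset.mem_sdiff] at hsS'
        exact hsS'.2 (Finset.mem_filter.2 ⟨hst, hsr⟩)

/-- Multiplicativity: if `(T₁,…,T_m) ⊢⊢ S` then `∏ᵢ N(Tᵢ,δ) ≤ N(S,δ)`. -/
theorem stmt14 {c k : ℕ} (δ : ℝ) (hδ0 : 0 ≤ δ) (hδ1 : δ ≤ 1)
    (S : Finset (Fin c ⊕ Fin k)) (Q : Finset (Finset (Fin c ⊕ Fin k)))
    (hQ : IsPseudo S Q) :
    ∏ t ∈ Q, NS δ t ≤ NS δ S :=
  stmt14_aux δ hδ0 Q S hQ
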